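/- Let R be a commutative ring and let A and B be groups. In the group ring R[A ∗ B], let J_A be the left ideal generated by the elements inl(a) − 1 for a ∈ A, and let J_B be the left ideal generated by the elements inr(b) − 1 for b ∈ B. Then J_A ⊓ J_B = 0 and J_A ⊔ J_B = I_{R[A ∗ B]}; that is, the augmentation ideal of R[A ∗ B] is the internal direct sum of J_A and J_B as left R[A ∗ B]-modules. -/

import Mathlib

/-!
The Fox derivative `D` of `R[A ∗ B]` with respect to the factor `A` is the `R`-linear extension
of the crossed homomorphism `d : A ∗ B → R[A ∗ B]`, `d (g * h) = d g + g * d h`, determined by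
`d (inl a) = inl a - 1` and `d (inr b) = 0`. It satisfies the Leibniz rule
`D (x * y) = x * D y + ε(y) • D x` (`ε` the augmentation), so on the augmentation ideal it is
left `R[A ∗ B]`-linear; comparing generators, `D` is the identity on `J_A` and vanishes on `J_B`,
whence `J_A ⊓ J_B = 0`. Since `g * h - 1 = (g - 1) + g * (h - 1)`, every `g - 1` lies in
`J_A ⊔ J_B`, and these elements span the augmentation ideal.
-/

open scoped Monoid.Coprod

/-- The augmentation `R[G] →ₐ[R] R` of the group ring `R[G] = MonoidAlgebra R G`. -/
noncomputable def augmentation (R : Type*) [CommRing R] (G : Type*) [Group G] :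
    MonoidAlgebra R G →ₐ[R] R :=
  MonoidAlgebra.lift R R G 1

/-- The augmentation ideal `I_{R[G]}` of the group ring. -/
noncomputable def augIdeal (R : Type*) [CommRing R] (G : Type*) [Group G] :
    Ideal (MonoidAlgebra R G) :=
  RingHom.ker (augmentation R G).toRingHom

open MonoidAlgebra Monoid.Coprod

section Augmentation

variable {R : Type*} [CommRing R] {G : Type*} [Group G]

@[simp]
lemma augmentation_of (g : G) : augmentation R G (of R G g) = 1 :=
  lift_of _ g

lemma mem_augIdeal {x : MonoidAlgebra R G} : x ∈ augIdeal R G ↔ augmentation R G x = 0 :=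
  Iff.rfl

lemma of_sub_one_mem_augIdeal (g : G) : of R G g - 1 ∈ augIdeal R G := by
  rw [mem_augIdeal, map_sub, augmentation_of, map_one, sub_self]

lemma augIdeal_le_of_forall_of_sub_one_mem {I : Ideal (MonoidAlgebra R G)}
    (hI : ∀ g, of R G g - 1 ∈ I) : augIdeal R G ≤ I := by
  have key (x : MonoidAlgebra R G) : x - algebraMap R _ (augmentation R G x) ∈ I := by
    induction x using MonoidAlgebra.induction_on with
    | of g => simpa only [augmentation_of, map_one] using hI g
    | add x y hx hy => simpa only [map_add, add_sub_add_comm] using I.add_mem hx hy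
    | smul r x hx =>
      simpa only [map_smul, smul_eq_mul, map_mul, ← Algebra.smul_def, smul_sub]
        using I.smul_of_tower_mem r hx
  intro x hx
  simpa only [mem_augIdeal.1 hx, map_zero, sub_zero] using key x

end Augmentation

section Cocycle

variable (R : Type*) [Ring R] (G : Type*) [Group G]

noncomputable def mulLeftMulAut : G →* MulAut (Multiplicative (MonoidAlgebra R G)) :=
  (MulAutMultiplicative _).symm.toMonoidHom.comp
    (AddAut.mulLeft.comp (of R G).toHomUnits)

variable (A B : Type*) [Group A] [Group B]

/-- A crossed homomorphism `d : G → M` (`d (g * h) = d g + g • d h`) is the same as a section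
`g ↦ (d g, g)` of `M ⋊ G → G`; out of `A ∗ B` such sections are freely prescribed on the two
factors. -/
noncomputable def inlCocycleLift :
    A ∗ B →* Multiplicative (MonoidAlgebra R (A ∗ B)) ⋊[mulLeftMulAut R (A ∗ B)] (A ∗ B) :=
  lift
    { toFun a := ⟨.ofAdd (of R _ (inl a) - 1), inl a⟩
      map_one' :=
        SemidirectProduct.ext (by rw [map_one, map_one, sub_self, ofAdd_zero]; rfl) (map_one _)
      map_mul' a a' := by
        refine SemidirectProduct.ext (congrArg Multiplicative.ofAdd ?_) (map_mul _ _ _)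
        change _ = of R (A ∗ B) (inl a) - 1 + of R (A ∗ B) (inl a) * (of R (A ∗ B) (inl a') - 1)
        rw [map_mul, map_mul]
        noncomm_ring }
    (SemidirectProduct.inr.comp inr)

lemma inlCocycleLift_right (g : A ∗ B) : (inlCocycleLift R A B g).right = g := by
  have : SemidirectProduct.rightHom.comp (inlCocycleLift R A B) = .id _ := by
    ext <;> simp only [MonoidHom.comp_apply, inlCocycleLift, lift_apply_inl, lift_apply_inr] <;> rfl
  exact DFunLike.congr_fun this g

noncomputable def inlCocycle (g : A ∗ B) : MonoidAlgebra R (A ∗ B) :=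
  (inlCocycleLift R A B g).left.toAdd

variable {R A B}

@[simp]
lemma inlCocycle_inl (a : A) : inlCocycle R A B (inl a) = of R _ (inl a) - 1 := by
  rw [inlCocycle, inlCocycleLift, lift_apply_inl]
  rfl

@[simp]
lemma inlCocycle_inr (b : B) : inlCocycle R A B (inr b) = 0 := by
  rw [inlCocycle, inlCocycleLift, lift_apply_inr]
  rfl

@[simp]
lemma inlCocycle_one : inlCocycle R A B 1 = 0 := by
  rw [inlCocycle, map_one]
  rfl

lemma inlCocycle_mul (g h : A ∗ B) :
    inlCocycle R A B (g * h) = inlCocycle R A B g + of R _ g * inlCocycle R A B h := by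
  rw [inlCocycle, map_mul, SemidirectProduct.mul_left, inlCocycleLift_right]
  rfl

end Cocycle

section FoxDerivative

variable (R : Type*) [CommRing R] (A B : Type*) [Group A] [Group B]

noncomputable def foxDerivInl : MonoidAlgebra R (A ∗ B) →ₗ[R] MonoidAlgebra R (A ∗ B) :=
  (basis (A ∗ B) R).constr R (inlCocycle R A B)

noncomputable def inlAugIdeal : Ideal (MonoidAlgebra R (A ∗ B)) :=
  Ideal.span {x | ∃ a : A, x = of R (A ∗ B) (inl a) - 1}

noncomputable def inrAugIdeal : Ideal (MonoidAlgebra R (A ∗ B)) :=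
  Ideal.span {x | ∃ b : B, x = of R (A ∗ B) (inr b) - 1}

variable {R A B}

lemma foxDerivInl_of (g : A ∗ B) : foxDerivInl R A B (of R _ g) = inlCocycle R A B g :=
  (basis (A ∗ B) R).constr_basis R _ g

lemma foxDerivInl_one : foxDerivInl R A B 1 = 0 := by
  rw [← map_one (of R (A ∗ B)), foxDerivInl_of, inlCocycle_one]

lemma foxDerivInl_mul_of (x : MonoidAlgebra R (A ∗ B)) (g : A ∗ B) :
    foxDerivInl R A B (x * of R _ g) = x * inlCocycle R A B g + foxDerivInl R A B x := by
  induction x using MonoidAlgebra.induction_on with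
  | of h => rw [← map_mul, foxDerivInl_of, foxDerivInl_of, inlCocycle_mul, add_comm]
  | add x y hx hy => rw [add_mul, map_add, hx, hy, map_add, add_mul]; abel
  | smul r x hx => rw [smul_mul_assoc, map_smul, hx, map_smul, smul_add, smul_mul_assoc]

lemma foxDerivInl_mul (x y : MonoidAlgebra R (A ∗ B)) :
    foxDerivInl R A B (x * y) =
      x * foxDerivInl R A B y + augmentation R _ y • foxDerivInl R A B x := by
  induction y using MonoidAlgebra.induction_on with
  | of g => rw [foxDerivInl_mul_of, foxDerivInl_of, augmentation_of, one_smul]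
  | add y y' hy hy' => rw [mul_add, map_add, hy, hy', map_add, mul_add, map_add, add_smul]; abel
  | smul r y hy =>
    rw [mul_smul_comm, map_smul, hy, map_smul, map_smul, smul_add, mul_smul_comm, smul_eq_mul,
      mul_smul]

lemma foxDerivInl_mul_of_mem_augIdeal (x : MonoidAlgebra R (A ∗ B)) {y : MonoidAlgebra R (A ∗ B)}
    (hy : y ∈ augIdeal R (A ∗ B)) : foxDerivInl R A B (x * y) = x * foxDerivInl R A B y := by
  rw [foxDerivInl_mul, mem_augIdeal.1 hy, zero_smul, add_zero]

lemma inlAugIdeal_le_augIdeal : inlAugIdeal R A B ≤ augIdeal R (A ∗ B) :=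
  Ideal.span_le.2 fun _ ⟨a, ha⟩ ↦ ha ▸ of_sub_one_mem_augIdeal (inl a)

lemma inrAugIdeal_le_augIdeal : inrAugIdeal R A B ≤ augIdeal R (A ∗ B) :=
  Ideal.span_le.2 fun _ ⟨b, hb⟩ ↦ hb ▸ of_sub_one_mem_augIdeal (inr b)

lemma foxDerivInl_eq_self_of_mem_inlAugIdeal {j : MonoidAlgebra R (A ∗ B)}
    (hj : j ∈ inlAugIdeal R A B) : foxDerivInl R A B j = j := by
  induction hj using Submodule.span_induction with
  | mem _ hx =>
    obtain ⟨a, rfl⟩ := hx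
    rw [map_sub, foxDerivInl_of, foxDerivInl_one, inlCocycle_inl, sub_zero]
  | zero => exact map_zero _
  | add x y _ _ hx hy => rw [map_add, hx, hy]
  | smul c x hx ih =>
    rw [smul_eq_mul, foxDerivInl_mul_of_mem_augIdeal c (inlAugIdeal_le_augIdeal hx), ih]

lemma foxDerivInl_eq_zero_of_mem_inrAugIdeal {j : MonoidAlgebra R (A ∗ B)}
    (hj : j ∈ inrAugIdeal R A B) : foxDerivInl R A B j = 0 := by
  induction hj using Submodule.span_induction with
  | mem _ hx =>
    obtain ⟨b, rfl⟩ := hx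
    rw [map_sub, foxDerivInl_of, foxDerivInl_one, inlCocycle_inr, sub_zero]
  | zero => exact map_zero _
  | add x y _ _ hx hy => rw [map_add, hx, hy, add_zero]
  | smul c x hx ih =>
    rw [smul_eq_mul, foxDerivInl_mul_of_mem_augIdeal c (inrAugIdeal_le_augIdeal hx), ih, mul_zero]

variable (R A B)

lemma inlAugIdeal_inf_inrAugIdeal : inlAugIdeal R A B ⊓ inrAugIdeal R A B = ⊥ :=
  eq_bot_iff.2 fun _ ⟨hA, hB⟩ ↦ (foxDerivInl_eq_self_of_mem_inlAugIdeal hA).symm.trans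
    (foxDerivInl_eq_zero_of_mem_inrAugIdeal hB)

lemma of_sub_one_mem_inlAugIdeal_sup_inrAugIdeal (g : A ∗ B) :
    of R _ g - 1 ∈ inlAugIdeal R A B ⊔ inrAugIdeal R A B := by
  induction g using Monoid.Coprod.induction_on with
  | inl a => exact Ideal.mem_sup_left (Ideal.subset_span ⟨a, rfl⟩)
  | inr b => exact Ideal.mem_sup_right (Ideal.subset_span ⟨b, rfl⟩)
  | mul g h hg hh =>
    have : of R _ (g * h) - 1 = (of R _ g - 1) + of R _ g * (of R _ h - 1) := by
      rw [map_mul]; noncomm_ring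
    rw [this]
    exact add_mem hg (Ideal.mul_mem_left _ _ hh)

lemma inlAugIdeal_sup_inrAugIdeal :
    inlAugIdeal R A B ⊔ inrAugIdeal R A B = augIdeal R (A ∗ B) :=
  le_antisymm (sup_le inlAugIdeal_le_augIdeal inrAugIdeal_le_augIdeal)
    (augIdeal_le_of_forall_of_sub_one_mem (of_sub_one_mem_inlAugIdeal_sup_inrAugIdeal R A B))

end FoxDerivative

theorem augIdeal_coprod_isInternalDirectSum
    (R : Type*) [CommRing R] (A B : Type*) [Group A] [Group B]
    (JA JB : Ideal (MonoidAlgebra R (A ∗ B)))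
    (hJA : JA = Ideal.span
      {x | ∃ a : A, x = MonoidAlgebra.of R (A ∗ B) (Monoid.Coprod.inl a) - 1})
    (hJB : JB = Ideal.span
      {x | ∃ b : B, x = MonoidAlgebra.of R (A ∗ B) (Monoid.Coprod.inr b) - 1}) :
    JA ⊓ JB = ⊥ ∧ JA ⊔ JB = augIdeal R (A ∗ B) := by
  subst hJA hJB
  exact ⟨inlAugIdeal_inf_inrAugIdeal R A B, inlAugIdeal_sup_inrAugIdeal R A B⟩
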